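/- arXiv:2410.24108 — 4 statements merged into one kernel-verified Lean document; each statement's English description precedes it below -/
import Mathlib

section
/- Let (Ω, P) be a probability space and X : Ω → ℝ a random variable with 0 ≤ X ≤ M almost surely, where M ≥ 0. Let a ∈ [0, M] and ε ∈ [0, 1] be such that P(X ≥ a) ≤ ε. Then for every t ∈ ℝ with t > E[X], the point mass satisfies P(X = t) ≤ ((1 − ε)·a² + ε·M² − (E[X])²)/(t − E[X])². In particular, whenever P(X = t) > 0, its reciprocal 1/P(X = t) is at least (t − E[X])²/((1 − ε)·a² + ε·M² − (E[X])²), i.e., it grows at least quadratically in t. -/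
/-!
Chebyshev's inequality at the single point `t` gives `(t - E[X])² · P(X = t) ≤ Var X
= E[X²] - E[X]²`. The tail hypothesis controls the second moment: `X² ≤ a²` off the event
`{a ≤ X}` and `X² ≤ M²` on it, so `E[X²] ≤ (1 - ε) a² + ε M²`.
-/

open MeasureTheory ProbabilityTheory

namespace ProbabilityTheory

variable {Ω : Type*} [MeasurableSpace Ω] {P : Measure Ω} {X : Ω → ℝ}

lemma measureReal_eq_le_variance_div_sq [IsFiniteMeasure P] (hX : MemLp X 2 P) {t : ℝ}
    (ht : t ≠ P[X]) : P.real {ω | X ω = t} ≤ variance X P / (t - P[X]) ^ 2 := by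
  have hc : 0 < |t - P[X]| := abs_pos.mpr (sub_ne_zero.mpr ht)
  have hsub : {ω | X ω = t} ⊆ {ω | |t - P[X]| ≤ |X ω - P[X]|} := fun ω hω => by
    simp_all
  calc P.real {ω | X ω = t}
      ≤ P.real {ω | |t - P[X]| ≤ |X ω - P[X]|} := measureReal_mono hsub
    _ ≤ variance X P / |t - P[X]| ^ 2 :=
        ENNReal.toReal_le_of_le_ofReal (div_nonneg (variance_nonneg _ _) (sq_nonneg _))
          (meas_ge_le_variance_div_sq hX hc)
    _ = variance X P / (t - P[X]) ^ 2 := by rw [sq_abs]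

lemma integral_sq_le_of_measure_ge_le [IsProbabilityMeasure P] (hX : Measurable X)
    {a M ε : ℝ} (hbound : ∀ᵐ ω ∂P, 0 ≤ X ω ∧ X ω ≤ M) (ha : a ∈ Set.Icc 0 M) (hε : 0 ≤ ε)
    (htail : P {ω | a ≤ X ω} ≤ ENNReal.ofReal ε) :
    ∫ ω, X ω ^ 2 ∂P ≤ (1 - ε) * a ^ 2 + ε * M ^ 2 := by
  obtain ⟨ha0, haM⟩ := ha
  set S := {ω | a ≤ X ω}
  have hS : MeasurableSet S := measurableSet_le measurable_const hX
  have hX2 : Integrable (fun ω => X ω ^ 2) P :=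
    (memLp_of_bounded hbound hX.aestronglyMeasurable 2).integrable_sq
  have hpointwise : ∀ᵐ ω ∂P, X ω ^ 2 ≤ a ^ 2 + S.indicator (fun _ => M ^ 2 - a ^ 2) ω := by
    filter_upwards [hbound] with ω ⟨h0, hM⟩
    by_cases h : a ≤ X ω
    · rw [Set.indicator_of_mem (show ω ∈ S from h)]
      nlinarith
    · rw [Set.indicator_of_notMem (show ω ∉ S from h)]
      nlinarith
  have hS_real : P.real S ≤ ε := ENNReal.toReal_le_of_le_ofReal hε htail
  calc ∫ ω, X ω ^ 2 ∂P
      ≤ ∫ ω, (a ^ 2 + S.indicator (fun _ => M ^ 2 - a ^ 2) ω) ∂P :=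
        integral_mono_ae hX2 ((integrable_const _).add ((integrable_const _).indicator hS))
          hpointwise
    _ = a ^ 2 + P.real S * (M ^ 2 - a ^ 2) := by
        rw [integral_add (integrable_const _) ((integrable_const _).indicator hS),
          integral_const, integral_indicator_const _ hS, probReal_univ, one_smul, smul_eq_mul]
    _ ≤ a ^ 2 + ε * (M ^ 2 - a ^ 2) := by gcongr; nlinarith
    _ = (1 - ε) * a ^ 2 + ε * M ^ 2 := by ring

end ProbabilityTheory

theorem return_coverage_bound_general {Ω : Type*} [MeasurableSpace Ω]
    (P : Measure Ω) [IsProbabilityMeasure P]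
    (X : Ω → ℝ) (hX : Measurable X) (M : ℝ)
    (hbound : ∀ᵐ ω ∂P, 0 ≤ X ω ∧ X ω ≤ M)
    (a ε : ℝ) (ha : a ∈ Set.Icc 0 M) (hε : ε ∈ Set.Icc (0 : ℝ) 1)
    (htail : P {ω | a ≤ X ω} ≤ ENNReal.ofReal ε)
    (t : ℝ) (ht : (∫ ω, X ω ∂P) < t) :
    (P {ω | X ω = t}).toReal
      ≤ ((1 - ε) * a ^ 2 + ε * M ^ 2 - (∫ ω, X ω ∂P) ^ 2) / (t - ∫ ω, X ω ∂P) ^ 2 ∧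
    ((P {ω | X ω = t}).toReal > 0 →
      (t - ∫ ω, X ω ∂P) ^ 2 / ((1 - ε) * a ^ 2 + ε * M ^ 2 - (∫ ω, X ω ∂P) ^ 2)
        ≤ 1 / (P {ω | X ω = t}).toReal) := by
  have hL2 : MemLp X 2 P := memLp_of_bounded hbound hX.aestronglyMeasurable 2
  have hgap : 0 < (t - ∫ ω, X ω ∂P) ^ 2 := pow_pos (sub_pos.mpr ht) 2
  have hpoint : (P {ω | X ω = t}).toReal
      ≤ ((1 - ε) * a ^ 2 + ε * M ^ 2 - (∫ ω, X ω ∂P) ^ 2) / (t - ∫ ω, X ω ∂P) ^ 2 :=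
    calc (P {ω | X ω = t}).toReal ≤ variance X P / (t - ∫ ω, X ω ∂P) ^ 2 :=
          measureReal_eq_le_variance_div_sq hL2 ht.ne'
      _ ≤ _ := by
          rw [variance_eq_sub hL2]
          gcongr
          exact integral_sq_le_of_measure_ge_le hX hbound ha hε.1 htail
  refine ⟨hpoint, fun hpos => ?_⟩
  have hbudget : 0 < (1 - ε) * a ^ 2 + ε * M ^ 2 - (∫ ω, X ω ∂P) ^ 2 :=
    (div_pos_iff_of_pos_right hgap).mp (hpos.trans_le hpoint)
  rw [div_le_div_iff₀ hbudget hpos, one_mul, mul_comm]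
  exact (le_div_iff₀ hgap).mp hpoint

theorem return_coverage_bound {Ω : Type*} [MeasurableSpace Ω]
    (P : Measure Ω) [IsProbabilityMeasure P]
    (X : Ω → ℝ) (hX : Measurable X) (M : ℝ) (hM : 0 ≤ M)
    (hbound : ∀ᵐ ω ∂P, 0 ≤ X ω ∧ X ω ≤ M)
    (a ε : ℝ) (ha : a ∈ Set.Icc 0 M) (hε : ε ∈ Set.Icc (0 : ℝ) 1)
    (htail : P {ω | a ≤ X ω} ≤ ENNReal.ofReal ε)
    (t : ℝ) (ht : (∫ ω, X ω ∂P) < t) :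
    (P {ω | X ω = t}).toReal
      ≤ ((1 - ε) * a ^ 2 + ε * M ^ 2 - (∫ ω, X ω ∂P) ^ 2) / (t - ∫ ω, X ω ∂P) ^ 2 ∧
    ((P {ω | X ω = t}).toReal > 0 →
      (t - ∫ ω, X ω ∂P) ^ 2 / ((1 - ε) * a ^ 2 + ε * M ^ 2 - (∫ ω, X ω ∂P) ^ 2)
        ≤ 1 / (P {ω | X ω = t}).toReal) :=
  return_coverage_bound_general P X hX M hbound a ε ha hε htail t ht
end

section
/- Let K > 0, t₀ ∈ ℝ, and let f : ℝ → ℝ be a measurable function that is nonnegative on [t₀, ∞), K-Lipschitz on [t₀, ∞), and integrable on [t₀, ∞). Then for every t ≥ t₀, f(t) ≤ sqrt(2K · ∫_{t₀}^{∞} f(x) dx). -/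
/-! If `f t = a > 0`, the Lipschitz bound keeps `f` above the triangle of height `a` and slope
`-K` on `[t, t + a / K]`; the area `a ^ 2 / (2 * K)` of that triangle is at most the integral of
`f`, since `f` is nonnegative. -/

open MeasureTheory Set

theorem integral_sub_mul_sub_eq (a K t : ℝ) (hK : K ≠ 0) :
    ∫ x in t..t + a / K, (a - K * (x - t)) = a ^ 2 / (2 * K) := by
  rw [intervalIntegral.integral_comp_sub_right (fun x => a - K * x), add_sub_cancel_left, sub_self,
    intervalIntegral.integral_sub intervalIntegrable_const
      ((continuous_const_mul K).intervalIntegrable _ _),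
    intervalIntegral.integral_const, intervalIntegral.integral_const_mul, integral_id, smul_eq_mul]
  field_simp
  ring

theorem sq_div_two_mul_le_setIntegral {f : ℝ → ℝ} {s : Set ℝ} {a K t : ℝ} (ha : 0 ≤ a)
    (hK : 0 < K) (hs : MeasurableSet s) (hf : IntegrableOn f s) (hf0 : ∀ x ∈ s, 0 ≤ f x)
    (hsub : Icc t (t + a / K) ⊆ s) (hlow : ∀ x ∈ Icc t (t + a / K), a - K * (x - t) ≤ f x) :
    a ^ 2 / (2 * K) ≤ ∫ x in s, f x := by
  have hle : t ≤ t + a / K := le_add_of_nonneg_right (div_nonneg ha hK.le)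
  calc a ^ 2 / (2 * K) = ∫ x in t..t + a / K, (a - K * (x - t)) :=
        (integral_sub_mul_sub_eq a K t hK.ne').symm
    _ ≤ ∫ x in t..t + a / K, f x :=
        intervalIntegral.integral_mono_on hle
          ((by fun_prop : Continuous fun x => a - K * (x - t)).intervalIntegrable _ _)
          ((intervalIntegrable_iff_integrableOn_Icc_of_le hle).mpr (hf.mono_set hsub)) hlow
    _ = ∫ x in Ioc t (t + a / K), f x := intervalIntegral.integral_of_le hle
    _ ≤ ∫ x in s, f x :=
        setIntegral_mono_set hf ((ae_restrict_iff' hs).mpr (.of_forall hf0))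
          (.of_forall (Ioc_subset_Icc_self.trans hsub))

theorem lipschitz_density_pointwise_bound_general (K t₀ : ℝ) (hK : 0 < K) (f : ℝ → ℝ)
    (hnonneg : ∀ x, t₀ ≤ x → 0 ≤ f x)
    (hlip : ∀ x y, t₀ ≤ x → t₀ ≤ y → |f x - f y| ≤ K * |x - y|)
    (hint : IntegrableOn f (Set.Ici t₀)) :
    ∀ t, t₀ ≤ t → f t ≤ Real.sqrt (2 * K * ∫ x in Set.Ici t₀, f x) := by
  intro t ht
  rcases le_or_gt (f t) 0 with hft | hft
  · exact hft.trans (Real.sqrt_nonneg _)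
  have hsub : Icc t (t + f t / K) ⊆ Ici t₀ := fun x hx => ht.trans hx.1
  have hlow : ∀ x ∈ Icc t (t + f t / K), f t - K * (x - t) ≤ f x := fun x hx => by
    have h := (abs_le.mp (hlip t x ht (hsub hx))).2
    rw [abs_sub_comm, abs_of_nonneg (sub_nonneg.mpr hx.1)] at h
    linarith
  have hsq := sq_div_two_mul_le_setIntegral hft.le hK measurableSet_Ici hint hnonneg hsub hlow
  rw [div_le_iff₀' (by positivity)] at hsq
  exact Real.le_sqrt_of_sq_le hsq

theorem lipschitz_density_pointwise_bound (K t₀ : ℝ) (hK : 0 < K) (f : ℝ → ℝ)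
    (hmeas : Measurable f)
    (hnonneg : ∀ x, t₀ ≤ x → 0 ≤ f x)
    (hlip : ∀ x y, t₀ ≤ x → t₀ ≤ y → |f x - f y| ≤ K * |x - y|)
    (hint : IntegrableOn f (Set.Ici t₀)) :
    ∀ t, t₀ ≤ t → f t ≤ Real.sqrt (2 * K * ∫ x in Set.Ici t₀, f x) :=
  lipschitz_density_pointwise_bound_general K t₀ hK f hnonneg hlip hint
end

section
/- Let K > 0, t₀ ∈ ℝ, p₀ ≥ 0, and let f : ℝ → ℝ be a measurable function that is nonnegative on [t₀, ∞), K-Lipschitz on [t₀, ∞), and integrable on [t₀, ∞). If ∫_{t₀}^{∞} f(x) dx ≤ p₀²/(2K), then f(t) ≤ p₀ for every t ≥ t₀. -/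
/-!
If `f t = c > 0` and `f` is `K`-Lipschitz, then `f` stays above the tent `c - K (x - t)` on
`[t, t + c/K]`, whose area is `c² / (2K)`. Since `f ≥ 0`, this area is at most the tail integral,
so `c² ≤ p₀²`.
-/

open MeasureTheory Set

theorem integral_tent {K : ℝ} (hK : K ≠ 0) (t c : ℝ) :
    ∫ x in t..t + c / K, (c - K * (x - t)) = c ^ 2 / (2 * K) := by
  simp only [intervalIntegral.integral_sub intervalIntegrable_const
      ((intervalIntegral.intervalIntegrable_id.sub intervalIntegrable_const).const_mul K),
    intervalIntegral.integral_const_mul, intervalIntegral.integral_comp_sub_right (fun x => x),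
    integral_id, intervalIntegral.integral_const, smul_eq_mul]
  field_simp
  ring

theorem sq_div_two_mul_le_intervalIntegral_of_tent_le {f : ℝ → ℝ} {K t c : ℝ} (hK : 0 < K)
    (hc : 0 ≤ c) (hf : IntervalIntegrable f volume t (t + c / K))
    (htent : ∀ x ∈ Icc t (t + c / K), c - K * (x - t) ≤ f x) :
    c ^ 2 / (2 * K) ≤ ∫ x in t..t + c / K, f x := by
  have hle : t ≤ t + c / K := le_add_of_nonneg_right (div_nonneg hc hK.le)
  rw [← integral_tent hK.ne' t c]
  exact intervalIntegral.integral_mono_on hle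
    ((by fun_prop : Continuous fun x => c - K * (x - t)).intervalIntegrable _ _) hf htent

theorem lipschitz_density_contrapositive_general (K t₀ p₀ : ℝ) (hK : 0 < K) (hp₀ : 0 ≤ p₀)
    (f : ℝ → ℝ)
    (hnonneg : ∀ x, t₀ ≤ x → 0 ≤ f x)
    (hlip : ∀ x y, t₀ ≤ x → t₀ ≤ y → |f x - f y| ≤ K * |x - y|)
    (hint : IntegrableOn f (Set.Ici t₀))
    (htail : (∫ x in Set.Ici t₀, f x) ≤ p₀ ^ 2 / (2 * K)) :
    ∀ t, t₀ ≤ t → f t ≤ p₀ := by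
  intro t ht
  have hsub : Ioc t (t + f t / K) ⊆ Ici t₀ := fun x hx => ht.trans hx.1.le
  have hle : t ≤ t + f t / K := le_add_of_nonneg_right (div_nonneg (hnonneg t ht) hK.le)
  have htent : ∀ x ∈ Icc t (t + f t / K), f t - K * (x - t) ≤ f x := fun x hx => by
    have := hlip x t (ht.trans hx.1) ht
    rw [abs_of_nonneg (sub_nonneg.2 hx.1)] at this
    linarith [neg_abs_le (f x - f t)]
  have harea : f t ^ 2 / (2 * K) ≤ ∫ x in Ici t₀, f x :=
    calc f t ^ 2 / (2 * K) ≤ ∫ x in t..t + f t / K, f x :=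
          sq_div_two_mul_le_intervalIntegral_of_tent_le hK (hnonneg t ht)
            ((intervalIntegrable_iff_integrableOn_Ioc_of_le hle).2 (hint.mono_set hsub)) htent
      _ = ∫ x in Ioc t (t + f t / K), f x := intervalIntegral.integral_of_le hle
      _ ≤ ∫ x in Ici t₀, f x :=
          setIntegral_mono_set hint (ae_restrict_of_forall_mem measurableSet_Ici hnonneg)
            hsub.eventuallyLE
  have hsq : f t ^ 2 ≤ p₀ ^ 2 :=
    (div_le_div_iff_of_pos_right (by positivity)).1 (harea.trans htail)
  exact (pow_le_pow_iff_left₀ (hnonneg t ht) hp₀ two_ne_zero).1 hsq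

theorem lipschitz_density_contrapositive (K t₀ p₀ : ℝ) (hK : 0 < K) (hp₀ : 0 ≤ p₀)
    (f : ℝ → ℝ) (hmeas : Measurable f)
    (hnonneg : ∀ x, t₀ ≤ x → 0 ≤ f x)
    (hlip : ∀ x y, t₀ ≤ x → t₀ ≤ y → |f x - f y| ≤ K * |x - y|)
    (hint : IntegrableOn f (Set.Ici t₀))
    (htail : (∫ x in Set.Ici t₀, f x) ≤ p₀ ^ 2 / (2 * K)) :
    ∀ t, t₀ ≤ t → f t ≤ p₀ :=
  lipschitz_density_contrapositive_general K t₀ p₀ hK hp₀ f hnonneg hlip hint htail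
end

section
/- Let (Ω, P) be a probability space and X : Ω → ℝ a random variable with 0 ≤ X ≤ M almost surely (M ≥ 0), whose law has a Lebesgue density f : ℝ → ℝ. Let a ∈ [0, M] and ε ∈ [0, 1] satisfy P(X ≥ a) ≤ ε, let K > 0, and suppose f is nonnegative and K-Lipschitz on [a, ∞). Set μ = E[X]. Then for every t ≥ a with t > μ, f(t) ≤ sqrt(2K · ((1 − ε)·a³ + ε·M³)) / (t − μ)^{3/2}. -/
/-!
Let `δ = f t / K`. The Lipschitz bound keeps `f` above the tent `f t - K (x - t)` on
`[t, t + δ]`, so `P (X ≥ t) ≥ f(t)² / 2K`. Markov's inequality for `X³` gives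
`t³ P (X ≥ t) ≤ E[X³]`, and splitting at `X = a` gives `E[X³] ≤ (1 - ε) a³ + ε M³`.
Since `t ≥ t - E[X]`, this yields `f(t)² (t - E[X])³ ≤ 2K ((1 - ε) a³ + ε M³)`.
-/

open MeasureTheory Set
open scoped NNReal

lemma sq_div_two_mul_le_setIntegral_Icc {f : ℝ → ℝ} {K : ℝ≥0} {t : ℝ} (hK : 0 < K)
    (hf : LipschitzOnWith K f (Ici t)) (ht : 0 ≤ f t) :
    f t ^ 2 / (2 * K) ≤ ∫ x in Icc t (t + f t / K), f x := by
  have hδ : t ≤ t + f t / K := le_add_of_nonneg_right (by positivity)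
  have htent : ∫ x in Icc t (t + f t / K), (f t - K * (x - t)) = f t ^ 2 / (2 * K) := by
    have hK' : (K : ℝ) ≠ 0 := by positivity
    rw [integral_Icc_eq_integral_Ioc, ← intervalIntegral.integral_of_le hδ,
      intervalIntegral.integral_comp_sub_right (fun x => f t - K * x),
      intervalIntegral.integral_sub, intervalIntegral.integral_const_mul]
    · simp only [sub_self, add_sub_cancel_left, intervalIntegral.integral_const, integral_id,
        smul_eq_mul]
      field_simp
      ring
    all_goals exact Continuous.intervalIntegrable (by fun_prop) _ _
  rw [← htent]
  refine setIntegral_mono_on (Continuous.integrableOn_Icc (by fun_prop))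
    ((hf.mono Icc_subset_Ici_self).continuousOn.integrableOn_Icc) measurableSet_Icc
    fun x hx => ?_
  have hdist := (le_abs_self _).trans (hf.dist_le_mul t (mem_Ici.2 le_rfl) x hx.1)
  rw [Real.dist_eq, abs_of_nonpos (by linarith [hx.1] : t - x ≤ 0)] at hdist
  linarith

section Probability

variable {Ω : Type*} [MeasurableSpace Ω] {P : Measure Ω}

lemma integral_le_add_mul_measureReal [IsProbabilityMeasure P] {Y : Ω → ℝ} {S : Set Ω}
    {b B : ℝ} (hS : MeasurableSet S) (hY : Integrable Y P)
    (hYS : ∀ᵐ ω ∂P, ω ∈ S → Y ω ≤ B) (hYSc : ∀ᵐ ω ∂P, ω ∉ S → Y ω ≤ b) :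
    ∫ ω, Y ω ∂P ≤ b + (B - b) * P.real S := by
  have hbound : ∫ ω, Y ω ∂P ≤ ∫ ω, b + S.indicator (fun _ => B - b) ω ∂P := by
    refine integral_mono_ae hY ((integrable_const _).add ((integrable_const _).indicator hS)) ?_
    filter_upwards [hYS, hYSc] with ω hωS hωSc
    by_cases hω : ω ∈ S
    · simpa [hω] using hωS hω
    · simpa [hω] using hωSc hω
  rwa [integral_add (integrable_const _) ((integrable_const _).indicator hS), integral_const,
    integral_indicator_const _ hS, probReal_univ, one_smul, smul_eq_mul, mul_comm] at hbound

lemma pow_mul_measureReal_le_integral_pow [IsFiniteMeasure P] {X : Ω → ℝ} {t : ℝ}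
    (ht : 0 ≤ t) (n : ℕ) (hX : 0 ≤ᵐ[P] X) (hXn : Integrable (fun ω => X ω ^ n) P) :
    t ^ n * P.real {ω | t ≤ X ω} ≤ ∫ ω, X ω ^ n ∂P :=
  calc t ^ n * P.real {ω | t ≤ X ω} ≤ t ^ n * P.real {ω | t ^ n ≤ X ω ^ n} := by
        gcongr t ^ n * ?_
        exact measureReal_mono (s₂ := {ω | t ^ n ≤ X ω ^ n})
          fun ω hω => pow_le_pow_left₀ ht hω n
    _ ≤ ∫ ω, X ω ^ n ∂P :=
        mul_meas_ge_le_integral_of_nonneg (hX.mono fun ω hω => pow_nonneg hω n) hXn _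

lemma integrable_pow_of_ae_mem_Icc [IsFiniteMeasure P] {X : Ω → ℝ} {M : ℝ}
    (hX : AEMeasurable X P) (hXM : ∀ᵐ ω ∂P, 0 ≤ X ω ∧ X ω ≤ M) (n : ℕ) :
    Integrable (fun ω => X ω ^ n) P := by
  refine .of_bound (hX.pow_const n).aestronglyMeasurable (M ^ n) ?_
  filter_upwards [hXM] with ω hω
  rw [Real.norm_eq_abs, abs_of_nonneg (pow_nonneg hω.1 n)]
  exact pow_le_pow_left₀ hω.1 hω.2 n

lemma integral_pow_le_of_measureReal_le [IsProbabilityMeasure P] {X : Ω → ℝ} {M a ε : ℝ}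
    (hX : Measurable X) (hXM : ∀ᵐ ω ∂P, 0 ≤ X ω ∧ X ω ≤ M) (ha : a ∈ Icc 0 M)
    (htail : P.real {ω | a ≤ X ω} ≤ ε) (n : ℕ) :
    ∫ ω, X ω ^ n ∂P ≤ (1 - ε) * a ^ n + ε * M ^ n := by
  have hsplit := integral_le_add_mul_measureReal (S := {ω | a ≤ X ω}) (b := a ^ n)
    (measurableSet_le measurable_const hX) (integrable_pow_of_ae_mem_Icc hX.aemeasurable hXM n)
    (hXM.mono fun ω h _ => pow_le_pow_left₀ h.1 h.2 n)
    (hXM.mono fun ω h hω => pow_le_pow_left₀ h.1 (not_le.1 hω).le n)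
  have haM : a ^ n ≤ M ^ n := pow_le_pow_left₀ ha.1 ha.2 n
  nlinarith

end Probability

lemma le_sqrt_div_rpow_three_halves {y c d : ℝ} (hd : 0 < d)
    (h : y ^ 2 * d ^ 3 ≤ c) : y ≤ √c / d ^ ((3 : ℝ) / 2) := by
  rw [le_div_iff₀ (by positivity), Real.rpow_div_two_eq_sqrt _ hd.le, Real.rpow_ofNat]
  refine Real.le_sqrt_of_sq_le ?_
  calc (y * √d ^ 3) ^ 2 = y ^ 2 * (√d ^ 2) ^ 3 := by ring
    _ = y ^ 2 * d ^ 3 := by rw [Real.sq_sqrt hd.le]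
    _ ≤ c := h

theorem continuous_return_coverage_bound_general {Ω : Type*} [MeasurableSpace Ω]
    (P : Measure Ω) [IsProbabilityMeasure P]
    (X : Ω → ℝ) (hX : Measurable X) (M : ℝ)
    (hbound : ∀ᵐ ω ∂P, 0 ≤ X ω ∧ X ω ≤ M)
    (f : ℝ → ℝ)
    (hdens : ∀ B : Set ℝ, MeasurableSet B → (P (X ⁻¹' B)).toReal = ∫ x in B, f x)
    (a ε : ℝ) (ha : a ∈ Set.Icc 0 M) (hε : ε ∈ Set.Icc (0 : ℝ) 1)
    (htail : P {ω | a ≤ X ω} ≤ ENNReal.ofReal ε)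
    (K : ℝ) (hK : 0 < K)
    (hlip : ∀ x y, a ≤ x → a ≤ y → |f x - f y| ≤ K * |x - y|) :
    ∀ t, a ≤ t → (∫ ω, X ω ∂P) < t →
      f t ≤ Real.sqrt (2 * K * ((1 - ε) * a ^ 3 + ε * M ^ 3))
              / (t - ∫ ω, X ω ∂P) ^ ((3 : ℝ) / 2) := by
  intro t hat hμt
  have hX0 : 0 ≤ᵐ[P] X := hbound.mono fun _ h => h.1
  have hμ : 0 ≤ ∫ ω, X ω ∂P := integral_nonneg_of_ae hX0
  have ht : 0 ≤ t := hμ.trans hμt.le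
  rcases le_or_gt (f t) 0 with hft | hft
  · exact hft.trans (div_nonneg (Real.sqrt_nonneg _) (Real.rpow_nonneg (sub_pos.2 hμt).le _))
  refine le_sqrt_div_rpow_three_halves (sub_pos.2 hμt) ?_
  lift K to ℝ≥0 using hK.le
  have hf : LipschitzOnWith K f (Ici t) := LipschitzOnWith.of_dist_le_mul
    fun x hx y hy => hlip x y (hat.trans hx) (hat.trans hy)
  have hmass : f t ^ 2 / (2 * K) ≤ P.real {ω | t ≤ X ω} :=
    calc f t ^ 2 / (2 * K) ≤ ∫ x in Icc t (t + f t / K), f x :=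
          sq_div_two_mul_le_setIntegral_Icc (by exact_mod_cast hK) hf hft.le
      _ = P.real (X ⁻¹' Icc t (t + f t / K)) := (hdens _ measurableSet_Icc).symm
      _ ≤ P.real {ω | t ≤ X ω} := measureReal_mono fun ω hω => hω.1
  calc f t ^ 2 * (t - ∫ ω, X ω ∂P) ^ 3 ≤ f t ^ 2 * t ^ 3 := by
        gcongr
        linarith
    _ = 2 * K * (t ^ 3 * (f t ^ 2 / (2 * K))) := by field_simp
    _ ≤ 2 * K * (t ^ 3 * P.real {ω | t ≤ X ω}) := by gcongr
    _ ≤ 2 * K * ∫ ω, X ω ^ 3 ∂P := by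
        gcongr
        exact pow_mul_measureReal_le_integral_pow ht 3 hX0
          (integrable_pow_of_ae_mem_Icc hX.aemeasurable hbound 3)
    _ ≤ 2 * K * ((1 - ε) * a ^ 3 + ε * M ^ 3) := by
        gcongr
        exact integral_pow_le_of_measureReal_le hX hbound ha
          (ENNReal.toReal_le_of_le_ofReal hε.1 htail) 3

theorem continuous_return_coverage_bound {Ω : Type*} [MeasurableSpace Ω]
    (P : Measure Ω) [IsProbabilityMeasure P]
    (X : Ω → ℝ) (hX : Measurable X) (M : ℝ) (hM : 0 ≤ M)
    (hbound : ∀ᵐ ω ∂P, 0 ≤ X ω ∧ X ω ≤ M)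
    (f : ℝ → ℝ) (hfmeas : Measurable f)
    (hdens : ∀ B : Set ℝ, MeasurableSet B → (P (X ⁻¹' B)).toReal = ∫ x in B, f x)
    (a ε : ℝ) (ha : a ∈ Set.Icc 0 M) (hε : ε ∈ Set.Icc (0 : ℝ) 1)
    (htail : P {ω | a ≤ X ω} ≤ ENNReal.ofReal ε)
    (K : ℝ) (hK : 0 < K)
    (hnonneg : ∀ x, a ≤ x → 0 ≤ f x)
    (hlip : ∀ x y, a ≤ x → a ≤ y → |f x - f y| ≤ K * |x - y|) :
    ∀ t, a ≤ t → (∫ ω, X ω ∂P) < t →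
      f t ≤ Real.sqrt (2 * K * ((1 - ε) * a ^ 3 + ε * M ^ 3))
              / (t - ∫ ω, X ω ∂P) ^ ((3 : ℝ) / 2) :=
  continuous_return_coverage_bound_general P X hX M hbound f hdens a ε ha hε htail K hK hlip
end
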